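/- For a standard TSS P in decent xynft format, supported provability and well-supported provability coincide: P ⊢_s α if and only if P ⊢_ws α, for every closed literal α. -/

import Mathlib

inductive Tm (F : Type) (ar : F → ℕ) (V : Type) : Type where
  | var : V → Tm F ar V
  | app : (f : F) → (Fin (ar f) → Tm F ar V) → Tm F ar V

variable {F V A : Type} {ar : F → ℕ}

def varsTm : Tm F ar V → Set V
  | .var x => {x}
  | .app _ ts => ⋃ i, varsTm (ts i)

def symsTm : Tm F ar V → Set F
  | .var _ => ∅
  | .app f ts => {f} ∪ ⋃ i, symsTm (ts i)

def ClosedTm (t : Tm F ar V) : Prop := varsTm t = ∅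

def subTm (σ : V → Tm F ar V) : Tm F ar V → Tm F ar V
  | .var x => σ x
  | .app f ts => .app f (fun i => subTm σ (ts i))

inductive Lit (F : Type) (ar : F → ℕ) (V A : Type) : Type where
  | pos : Tm F ar V → A → Tm F ar V → Lit F ar V A
  | neg : Tm F ar V → A → Lit F ar V A

def Lit.lhs : Lit F ar V A → Tm F ar V
  | .pos t _ _ => t
  | .neg t _ => t

def Lit.isNeg : Lit F ar V A → Prop
  | .pos _ _ _ => False
  | .neg _ _ => True

def ClosedLit : Lit F ar V A → Prop
  | .pos t _ t' => ClosedTm t ∧ ClosedTm t'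
  | .neg t _ => ClosedTm t

def varsLit : Lit F ar V A → Set V
  | .pos t _ t' => varsTm t ∪ varsTm t'
  | .neg t _ => varsTm t

def symsLit : Lit F ar V A → Set F
  | .pos t _ t' => symsTm t ∪ symsTm t'
  | .neg t _ => symsTm t

def Denies : Lit F ar V A → Lit F ar V A → Prop
  | .pos t a _, .neg u b => t = u ∧ a = b
  | .neg t a, .pos u b _ => t = u ∧ a = b
  | .pos _ _ _, .pos _ _ _ => False
  | .neg _ _, .neg _ _ => False

def subLit (σ : V → Tm F ar V) : Lit F ar V A → Lit F ar V A
  | .pos t a t' => .pos (subTm σ t) a (subTm σ t')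
  | .neg t a => .neg (subTm σ t) a

structure Rule (F : Type) (ar : F → ℕ) (V A : Type) : Type where
  prem : Set (Lit F ar V A)
  concl : Lit F ar V A

def Rule.source (r : Rule F ar V A) : Tm F ar V := r.concl.lhs

def Rule.vars (r : Rule F ar V A) : Set V := varsLit r.concl ∪ ⋃ l ∈ r.prem, varsLit l

def Rule.syms (r : Rule F ar V A) : Set F := symsLit r.concl ∪ ⋃ l ∈ r.prem, symsLit l

def subRule (σ : V → Tm F ar V) (r : Rule F ar V A) : Rule F ar V A :=
  ⟨subLit σ '' r.prem, subLit σ r.concl⟩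

/-- the right-hand side variables of the positive literals in `H` -/
def rhsVars (H : Set (Lit F ar V A)) : Set V := {y | ∃ t a, Lit.pos t a (.var y) ∈ H}

/-- the variables occurring in left-hand sides of literals in `H` -/
def lhsVars (H : Set (Lit F ar V A)) : Set V := ⋃ l ∈ H, varsTm l.lhs

structure IsNtytt (r : Rule F ar V A) : Prop where
  rhs_var : ∀ {t : Tm F ar V} {a : A} {t' : Tm F ar V},
    Lit.pos t a t' ∈ r.prem → ∃ y : V, t' = Tm.var y
  rhs_distinct : ∀ {t u : Tm F ar V} {a b : A} {y : V},
    Lit.pos t a (.var y) ∈ r.prem → Lit.pos u b (.var y) ∈ r.prem → t = u ∧ a = b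
  rhs_fresh : ∀ {t : Tm F ar V} {a : A} {y : V},
    Lit.pos t a (.var y) ∈ r.prem → y ∉ varsTm r.source

def NoLookahead (r : Rule F ar V A) : Prop :=
  ∀ y ∈ rhsVars r.prem, y ∉ lhsVars r.prem

def NoFreeVars (r : Rule F ar V A) : Prop :=
  ∀ x ∈ r.vars, x ∈ varsTm r.source ∨ x ∈ rhsVars r.prem

def Decent (r : Rule F ar V A) : Prop := NoLookahead r ∧ NoFreeVars r

/-- the source is of the form `f(x₁,…,x_{ar f})` with distinct variables -/
def NtyftSource (r : Rule F ar V A) : Prop :=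
  ∃ (f : F) (xs : Fin (ar f) → V), Function.Injective xs ∧
    r.source = Tm.app f (fun i => Tm.var (xs i))

/-- decent xynft rule: decent ntyft rule whose positive premises have variables as
left-hand sides -/
def DecentXynft (r : Rule F ar V A) : Prop :=
  IsNtytt r ∧ Decent r ∧ NtyftSource r ∧
    ∀ {t : Tm F ar V} {a : A} {t' : Tm F ar V},
      Lit.pos t a t' ∈ r.prem → ∃ x : V, t = Tm.var x

/-- `Proves R H α` : the transition rule `H/α` is provable from the TSS `R`,
i.e. there is a well-founded proof tree with root `α` whose hypotheses are included in `H`. -/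
inductive Proves (R : Set (Rule F ar V A)) : Set (Lit F ar V A) → Lit F ar V A → Prop where
  | hyp {H : Set (Lit F ar V A)} {α : Lit F ar V A} : α ∈ H → Proves R H α
  | step {H : Set (Lit F ar V A)} (r : Rule F ar V A) (σ : V → Tm F ar V) :
      r ∈ R → (∀ β ∈ r.prem, Proves R H (subLit σ β)) → Proves R H (subLit σ r.concl)

/-- `IProves R H α` : the transition rule `H/α` is irredundantly provable from `R`:
there is a proof tree with root `α` whose set of hypotheses is exactly `H`. -/
inductive IProves (R : Set (Rule F ar V A)) : Set (Lit F ar V A) → Lit F ar V A → Prop where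
  | hyp (α : Lit F ar V A) : IProves R {α} α
  | step (r : Rule F ar V A) (σ : V → Tm F ar V) (K : Lit F ar V A → Set (Lit F ar V A)) :
      r ∈ R → (∀ β ∈ r.prem, IProves R (K β) (subLit σ β)) →
      IProves R (⋃ β ∈ r.prem, K β) (subLit σ r.concl)

/-- Well-supported provability of a closed literal. -/
inductive WS (R : Set (Rule F ar V A)) : Lit F ar V A → Prop where
  | step (r : Rule F ar V A) (σ : V → Tm F ar V) :
      r ∈ R → (∀ x, ClosedTm (σ x)) →
      (∀ β ∈ r.prem, WS R (subLit σ β)) → WS R (subLit σ r.concl)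
  | neg (t : Tm F ar V) (a : A)
      (δ : Set (Lit F ar V A) → Tm F ar V → Lit F ar V A) :
      ClosedTm t →
      (∀ (N : Set (Lit F ar V A)) (t' : Tm F ar V),
        (∀ β ∈ N, β.isNeg ∧ ClosedLit β) → ClosedTm t' →
        Proves R N (.pos t a t') →
        WS R (δ N t')) →
      (∀ (N : Set (Lit F ar V A)) (t' : Tm F ar V),
        (∀ β ∈ N, β.isNeg ∧ ClosedLit β) → ClosedTm t' →
        Proves R N (.pos t a t') →
        ∃ β ∈ N, Denies (δ N t') β) →
      WS R (.neg t a)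

/-- One proof step of the ordinal-bounded well-supported provability relation. -/
def WSStep {F V A : Type} {ar : F → ℕ} (R : Set (Rule F ar V A))
    (prev : Lit F ar V A → Prop) (α : Lit F ar V A) : Prop :=
  (∃ r ∈ R, ∃ σ : V → Tm F ar V, (∀ x, ClosedTm (σ x)) ∧ subLit σ r.concl = α ∧
      ∀ β ∈ r.prem, prev (subLit σ β)) ∨
  (∃ (t : Tm F ar V) (a : A), α = Lit.neg t a ∧ ClosedTm t ∧
      ∀ (N : Set (Lit F ar V A)) (t' : Tm F ar V),
        (∀ β ∈ N, β.isNeg ∧ ClosedLit β) → ClosedTm t' →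
        Proves R N (.pos t a t') →
        ∃ δ : Lit F ar V A, prev δ ∧ ∃ β ∈ N, Denies δ β)

/-- `WSB R κ α` : `P ⊢_ws^κ α`. -/
noncomputable def WSB {F V A : Type} {ar : F → ℕ} (R : Set (Rule F ar V A))
    (κ : Ordinal) : Lit F ar V A → Prop :=
  Ordinal.limitRecOn (motive := fun _ => Lit F ar V A → Prop) κ
    (fun _ => False)
    (fun _ prev => WSStep R prev)
    (fun o _ ih α => ∃ (o' : Ordinal) (h : o' < o), ih o' h α)

/-- One proof step of the ordinal-bounded supported provability relation. -/
def SupStep {F V A : Type} {ar : F → ℕ} (R : Set (Rule F ar V A))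
    (prev : Lit F ar V A → Prop) (α : Lit F ar V A) : Prop :=
  (∃ r ∈ R, ∃ σ : V → Tm F ar V, (∀ x, ClosedTm (σ x)) ∧ subLit σ r.concl = α ∧
      ∀ β ∈ r.prem, prev (subLit σ β)) ∨
  (α.isNeg ∧ ClosedLit α ∧
      ∀ r ∈ R, ∀ σ : V → Tm F ar V, (∀ x, ClosedTm (σ x)) →
        Denies (subLit σ r.concl) α →
        ∃ δ : Lit F ar V A, prev δ ∧ ∃ β ∈ r.prem, Denies δ (subLit σ β))

/-- `SupB R κ α` : `P ⊢_s^κ α`. -/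
noncomputable def SupB {F V A : Type} {ar : F → ℕ} (R : Set (Rule F ar V A))
    (κ : Ordinal) : Lit F ar V A → Prop :=
  Ordinal.limitRecOn (motive := fun _ => Lit F ar V A → Prop) κ
    (fun _ => False)
    (fun _ prev => SupStep R prev)
    (fun o _ ih α => ∃ (o' : Ordinal) (h : o' < o), ih o' h α)


section AuxLemmas

open Classical

variable {R : Set (Rule F ar V A)}

lemma closed_subTm (σ : V → Tm F ar V) (hσ : ∀ x, ClosedTm (σ x)) (t : Tm F ar V) :
    ClosedTm (subTm σ t) := by
  induction t with
  | var x => exact hσ x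
  | app f ts ih =>
    show varsTm (Tm.app f fun i => subTm σ (ts i)) = ∅
    simp only [varsTm, Set.iUnion_eq_empty]
    exact fun i => ih i

lemma subTm_eq_of_closed {t : Tm F ar V} (h : ClosedTm t) (σ : V → Tm F ar V) :
    subTm σ t = t := by
  induction t with
  | var x => exact absurd h (Set.singleton_ne_empty x)
  | app f ts ih =>
    have h' : ∀ i, ClosedTm (ts i) := by
      have := h
      simp only [ClosedTm, varsTm, Set.iUnion_eq_empty] at this
      exact this
    show Tm.app f (fun i => subTm σ (ts i)) = _
    congr 1
    funext i
    exact ih i (h' i)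

lemma subTm_comp (τ σ : V → Tm F ar V) (t : Tm F ar V) :
    subTm τ (subTm σ t) = subTm (fun v => subTm τ (σ v)) t := by
  induction t with
  | var x => rfl
  | app f ts ih =>
    show Tm.app f _ = Tm.app f _
    congr 1
    funext i
    exact ih i

lemma subTm_congr {σ σ' : V → Tm F ar V} {t : Tm F ar V}
    (h : ∀ v ∈ varsTm t, σ v = σ' v) : subTm σ t = subTm σ' t := by
  induction t with
  | var x => exact h x rfl
  | app f ts ih =>
    show Tm.app f _ = Tm.app f _
    congr 1
    funext i
    exact ih i (fun v hv => h v (Set.mem_iUnion.2 ⟨i, hv⟩))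

lemma closed_subLit (σ : V → Tm F ar V) (hσ : ∀ x, ClosedTm (σ x)) (l : Lit F ar V A) :
    ClosedLit (subLit σ l) := by
  cases l with
  | pos t a t' => exact ⟨closed_subTm σ hσ t, closed_subTm σ hσ t'⟩
  | neg t a => exact closed_subTm σ hσ t

lemma subLit_eq_of_closed {l : Lit F ar V A} (h : ClosedLit l) (σ : V → Tm F ar V) :
    subLit σ l = l := by
  cases l with
  | pos t a t' =>
    show Lit.pos _ _ _ = _
    rw [subTm_eq_of_closed h.1, subTm_eq_of_closed h.2]
  | neg t a =>
    show Lit.neg _ _ = _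
    rw [subTm_eq_of_closed h]

lemma subLit_comp (τ σ : V → Tm F ar V) (l : Lit F ar V A) :
    subLit τ (subLit σ l) = subLit (fun v => subTm τ (σ v)) l := by
  cases l with
  | pos t a t' =>
    show Lit.pos _ _ _ = Lit.pos _ _ _
    rw [subTm_comp, subTm_comp]
  | neg t a =>
    show Lit.neg _ _ = Lit.neg _ _
    rw [subTm_comp]

lemma Proves.mono {H H' : Set (Lit F ar V A)} {α : Lit F ar V A}
    (h : Proves R H α) (hsub : H ⊆ H') : Proves R H' α := by
  induction h with
  | hyp hm => exact .hyp (hsub hm)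
  | step r σ hr hp ih => exact .step r σ hr (fun β hβ => ih β hβ)

lemma Proves.subst {H : Set (Lit F ar V A)} {α : Lit F ar V A}
    (h : Proves R H α) (τ : V → Tm F ar V) : Proves R (subLit τ '' H) (subLit τ α) := by
  induction h with
  | hyp hm => exact .hyp (Set.mem_image_of_mem _ hm)
  | step r σ hr hp ih =>
    rw [subLit_comp]
    exact .step r (fun v => subTm τ (σ v)) hr
      (fun β hβ => by rw [← subLit_comp]; exact ih β hβ)

lemma image_closed {H : Set (Lit F ar V A)} (h : ∀ β ∈ H, ClosedLit β)
    (τ : V → Tm F ar V) : subLit τ '' H = H := by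
  ext x
  constructor
  · rintro ⟨b, hb, rfl⟩
    rw [subLit_eq_of_closed (h b hb)]
    exact hb
  · intro hx
    exact ⟨x, hx, subLit_eq_of_closed (h x hx) τ⟩

lemma proves_isNeg_mem (hstd : ∀ r ∈ R, ¬ r.concl.isNeg)
    {H : Set (Lit F ar V A)} {α : Lit F ar V A} (h : Proves R H α)
    (hα : α.isNeg) : α ∈ H := by
  cases h with
  | hyp hm => exact hm
  | step r σ hr hp =>
    exfalso
    cases hc : r.concl with
    | pos s c tg => rw [hc] at hα; exact hα
    | neg s c => exact hstd r hr (by rw [hc]; trivial)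

end AuxLemmas


section SupBLemmas

variable {R : Set (Rule F ar V A)}

lemma supB_zero (R : Set (Rule F ar V A)) (α : Lit F ar V A) : ¬ SupB R 0 α := by
  unfold SupB
  rw [Ordinal.limitRecOn_zero]
  exact id

lemma supB_succ (R : Set (Rule F ar V A)) (κ : Ordinal) (α : Lit F ar V A) :
    SupB R (Order.succ κ) α ↔ SupStep R (SupB R κ) α := by
  unfold SupB
  rw [Ordinal.limitRecOn_succ]

lemma supB_limit (R : Set (Rule F ar V A)) {κ : Ordinal} (h : Order.IsSuccLimit κ) (α : Lit F ar V A) :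
    SupB R κ α ↔ ∃ κ' : Ordinal, ∃ _ : κ' < κ, SupB R κ' α := by
  unfold SupB
  rw [Ordinal.limitRecOn_limit _ _ _ _ h]

lemma SupStep.mono {p q : Lit F ar V A → Prop} (hpq : ∀ δ, p δ → q δ)
    {α : Lit F ar V A} (h : SupStep R p α) : SupStep R q α := by
  rcases h with ⟨r, hr, σ, hσ, hc, hprem⟩ | ⟨h1, h2, h3⟩
  · exact Or.inl ⟨r, hr, σ, hσ, hc, fun β hβ => hpq _ (hprem β hβ)⟩
  · refine Or.inr ⟨h1, h2, fun r hr σ hσ hd => ?_⟩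
    obtain ⟨δ, hδ, β, hβ, hden⟩ := h3 r hr σ hσ hd
    exact ⟨δ, hpq _ hδ, β, hβ, hden⟩

universe u

lemma supB_mono : ∀ κ : Ordinal.{u}, ∀ α : Lit F ar V A, SupB R κ α →
    ∀ κ' : Ordinal.{u}, κ ≤ κ' → SupB R κ' α := by
  intro κ
  induction κ using Ordinal.induction with
  | h κ IH =>
    intro α hα κ' hκκ'
    rcases Ordinal.zero_or_succ_or_isSuccLimit κ with h0 | ⟨κ₀, rfl⟩ | hlim
    · subst h0; exact absurd hα (supB_zero R α)
    · rcases Ordinal.zero_or_succ_or_isSuccLimit κ' with h0' | ⟨κ₁, rfl⟩ | hlim'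
      · subst h0'
        exact absurd (lt_of_lt_of_le (Order.lt_succ κ₀) hκκ') (by simp)
      · rw [supB_succ] at hα ⊢
        have hκ₀κ₁ : κ₀ ≤ κ₁ := Order.succ_le_succ_iff.1 hκκ'
        exact hα.mono (fun δ hδ => IH κ₀ (Order.lt_succ κ₀) δ hδ κ₁ hκ₀κ₁)
      · rw [supB_limit R hlim']
        rcases eq_or_lt_of_le hκκ' with rfl | hlt
        · exact absurd hlim' (Order.not_isSuccLimit_succ κ₀)
        · exact ⟨_, hlt, hα⟩
    · rw [supB_limit R hlim] at hα
      obtain ⟨κ₀, hκ₀, h⟩ := hα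
      exact IH κ₀ hκ₀ α h κ' (le_trans hκ₀.le hκκ')

lemma supB_prefix {α : Lit F ar V A}
    (h : SupStep R (fun δ => ∃ κ : Ordinal.{u}, SupB R κ δ) α) :
    ∃ κ : Ordinal.{u}, SupB R κ α := by
  classical
  rcases h with ⟨r, hr, σ, hσ, hc, hprem⟩ | ⟨h1, h2, h3⟩
  · choose g hg using fun β : {β // β ∈ r.prem} => hprem β.1 β.2
    refine ⟨Order.succ (⨆ β, g β), ?_⟩
    rw [supB_succ]
    refine Or.inl ⟨r, hr, σ, hσ, hc, fun β hβ => ?_⟩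
    exact supB_mono _ _ (hg ⟨β, hβ⟩) _ (le_ciSup (Ordinal.bddAbove_range g) ⟨β, hβ⟩)
  · choose δf hδf hden using fun x : {p : Rule F ar V A × (V → Tm F ar V) //
      p.1 ∈ R ∧ (∀ v, ClosedTm (p.2 v)) ∧ Denies (subLit p.2 p.1.concl) α} =>
      h3 x.1.1 x.2.1 x.1.2 x.2.2.1 x.2.2.2
    choose κf hκf using hδf
    refine ⟨Order.succ (⨆ x, κf x), ?_⟩
    rw [supB_succ]
    refine Or.inr ⟨h1, h2, fun r hr σ hσ hd => ?_⟩
    refine ⟨δf ⟨(r, σ), hr, hσ, hd⟩, ?_, hden ⟨(r, σ), hr, hσ, hd⟩⟩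
    exact supB_mono _ _ (hκf _) _ (le_ciSup (Ordinal.bddAbove_range κf) _)

end SupBLemmas

noncomputable def sizeTm : Tm F ar V → ℕ
  | .var _ => 1
  | .app _ ts => 1 + ∑ i, sizeTm (ts i)

lemma sizeTm_lt (f : F) (ts : Fin (ar f) → Tm F ar V) (i : Fin (ar f)) :
    sizeTm (ts i) < sizeTm (Tm.app f ts) := by
  show _ < 1 + ∑ i, sizeTm (ts i)
  have : sizeTm (ts i) ≤ ∑ j, sizeTm (ts j) :=
    Finset.single_le_sum (f := fun j => sizeTm (ts j)) (fun _ _ => Nat.zero_le _)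
      (Finset.mem_univ i)
  omega

lemma one_le_sizeTm (t : Tm F ar V) : 1 ≤ sizeTm t := by
  cases t <;> simp [sizeTm]


section Dir1

variable {R : Set (Rule F ar V A)}

lemma proves_inv {H : Set (Lit F ar V A)} {α : Lit F ar V A} (h : Proves R H α) :
    α ∈ H ∨ ∃ r ∈ R, ∃ σ : V → Tm F ar V, subLit σ r.concl = α ∧
      ∀ β ∈ r.prem, Proves R H (subLit σ β) := by
  cases h with
  | hyp hm => exact Or.inl hm
  | step r σ hr hp => exact Or.inr ⟨r, hr, σ, rfl, hp⟩

lemma ws_neg_inv (hstd : ∀ r ∈ R, ¬ r.concl.isNeg) {α : Lit F ar V A} (h : WS R α) :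
    ∀ t a, α = Lit.neg t a →
    ∀ (N : Set (Lit F ar V A)) (t' : Tm F ar V),
      (∀ β ∈ N, β.isNeg ∧ ClosedLit β) → ClosedTm t' → Proves R N (Lit.pos t a t') →
      ∃ e, WS R e ∧ ∃ β ∈ N, Denies e β := by
  cases h with
  | step r σ hr hσ hp =>
    intro t a heq
    exfalso
    cases hcc : r.concl with
    | pos s c tg =>
      rw [hcc] at heq
      simp [subLit] at heq
    | neg s c => exact hstd r hr (by rw [hcc]; trivial)
  | neg t₂ a₂ δ₂ hcl₂ hWS₂ hden₂ =>
    intro t a heq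
    injection heq with h1 h2
    subst h1; subst h2
    intro N t' hN ht' hpf
    exact ⟨δ₂ N t', hWS₂ N t' hN ht' hpf, hden₂ N t' hN ht' hpf⟩

lemma supB_to_ws (hstd : ∀ r ∈ R, ¬ r.concl.isNeg) :
    ∀ κ : Ordinal.{u}, ∀ α : Lit F ar V A, SupB R κ α → WS R α := by
  intro κ
  induction κ using Ordinal.induction with
  | h κ IH =>
    intro α hα
    rcases Ordinal.zero_or_succ_or_isSuccLimit κ with h0 | ⟨κ₀, rfl⟩ | hlim
    · subst h0; exact absurd hα (supB_zero R α)
    · rw [supB_succ] at hα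
      rcases hα with ⟨r, hr, σ, hσ, hc, hprem⟩ | ⟨hneg, hcl, href⟩
      · rw [← hc]
        exact WS.step r σ hr hσ (fun β hβ => IH κ₀ (Order.lt_succ κ₀) _ (hprem β hβ))
      · cases α with
        | pos t a t' => exact hneg.elim
        | neg t a =>
          have hclt : ClosedTm t := hcl
          have claim : ∀ (N : Set (Lit F ar V A)) (t' : Tm F ar V),
              (∀ β ∈ N, β.isNeg ∧ ClosedLit β) → ClosedTm t' →
              Proves R N (Lit.pos t a t') →
              ∃ d, WS R d ∧ ∃ β ∈ N, Denies d β := by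
            intro N t' hN ht' hpf
            rcases proves_inv hpf with hm | ⟨r, hr, σ', heq, hprem'⟩
            · exact absurd (hN _ hm).1 id
            · obtain ⟨s, c, tg, hc'⟩ : ∃ s c tg, r.concl = Lit.pos s c tg := by
                cases hcc : r.concl with
                | pos s c tg => exact ⟨s, c, tg, rfl⟩
                | neg s c => exact absurd (by rw [hcc]; trivial) (hstd r hr)
              rw [hc'] at heq
              simp only [subLit] at heq
              injection heq with hs hcc htg
              have hτ : ∀ v : V, ClosedTm ((fun _ : V => t) v) := fun _ => hclt
              have hσ'' : ∀ v, ClosedTm (subTm (fun _ : V => t) (σ' v)) :=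
                fun v => closed_subTm _ hτ _
              have hdenc : Denies
                  (subLit (fun v => subTm (fun _ : V => t) (σ' v)) r.concl)
                  (Lit.neg t a) := by
                rw [hc']
                refine ⟨?_, hcc⟩
                rw [← subTm_comp, hs, subTm_eq_of_closed hclt]
              obtain ⟨δ, hδκ, β', hβ'm, hδden⟩ := href r hr _ hσ'' hdenc
              have hδWS : WS R δ := IH κ₀ (Order.lt_succ κ₀) δ hδκ
              have himg : subLit (fun _ : V => t) '' N = N :=
                image_closed (fun β hβ => (hN β hβ).2) _
              cases β' with
              | pos p c' q =>
                simp only [subLit] at hδden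
                obtain ⟨w, d, rfl, hw, hd⟩ : ∃ w d, δ = Lit.neg w d ∧
                    w = subTm (fun v => subTm (fun _ : V => t) (σ' v)) p ∧ d = c' := by
                  cases δ with
                  | pos _ _ _ => exact absurd hδden id
                  | neg w d => exact ⟨w, d, rfl, hδden.1, hδden.2⟩
                have hp1 : Proves R N (Lit.pos (subTm σ' p) c' (subTm σ' q)) := by
                  simpa only [subLit] using hprem' _ hβ'm
                have hp2 : Proves R N
                    (Lit.pos (subTm (fun v => subTm (fun _ : V => t) (σ' v)) p) c'
                      (subTm (fun v => subTm (fun _ : V => t) (σ' v)) q)) := by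
                  have h2 := hp1.subst (fun _ : V => t)
                  rw [himg] at h2
                  simp only [subLit] at h2
                  rw [subTm_comp, subTm_comp] at h2
                  exact h2
                refine ws_neg_inv hstd hδWS w d rfl N _ hN
                  (closed_subTm _ hσ'' q) ?_
                rw [hw, hd]
                exact hp2
              | neg w c' =>
                simp only [subLit] at hδden
                obtain ⟨p, d, q, rfl, hpd, hdd⟩ : ∃ p d q, δ = Lit.pos p d q ∧
                    p = subTm (fun v => subTm (fun _ : V => t) (σ' v)) w ∧ d = c' := by
                  cases δ with
                  | neg _ _ => exact absurd hδden id
                  | pos p d q => exact ⟨p, d, q, rfl, hδden.1, hδden.2⟩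
                have hp1 : Proves R N (Lit.neg (subTm σ' w) c') := by
                  simpa only [subLit] using hprem' _ hβ'm
                have hm := proves_isNeg_mem hstd hp1 trivial
                have hcw : ClosedTm (subTm σ' w) := (hN _ hm).2
                refine ⟨Lit.pos p d q, hδWS, Lit.neg (subTm σ' w) c', hm, ?_, hdd⟩
                rw [hpd, ← subTm_comp, subTm_eq_of_closed hcw]
          classical
          refine WS.neg t a (fun N t' =>
            if h : (∀ β ∈ N, β.isNeg ∧ ClosedLit β) ∧ ClosedTm t' ∧
                Proves R N (Lit.pos t a t')
            then Classical.choose (claim N t' h.1 h.2.1 h.2.2)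
            else Lit.neg t a) hclt ?_ ?_
          · intro N t' h1 h2 h3
            have hcnd : (∀ β ∈ N, β.isNeg ∧ ClosedLit β) ∧ ClosedTm t' ∧
                Proves R N (Lit.pos t a t') := ⟨h1, h2, h3⟩
            simp only [dif_pos hcnd]
            exact (Classical.choose_spec (claim N t' hcnd.1 hcnd.2.1 hcnd.2.2)).1
          · intro N t' h1 h2 h3
            have hcnd : (∀ β ∈ N, β.isNeg ∧ ClosedLit β) ∧ ClosedTm t' ∧
                Proves R N (Lit.pos t a t') := ⟨h1, h2, h3⟩
            simp only [dif_pos hcnd]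
            exact (Classical.choose_spec (claim N t' hcnd.1 hcnd.2.1 hcnd.2.2)).2
    · rw [supB_limit R hlim] at hα
      obtain ⟨κ', hκ', h⟩ := hα
      exact IH κ' hκ' α h

end Dir1


section Dir2

variable {R : Set (Rule F ar V A)}

lemma key_neg (hstd : ∀ r ∈ R, ¬ r.concl.isNeg) (hfmt : ∀ r ∈ R, DecentXynft r) :
    ∀ n : ℕ, ∀ u : Tm F ar V, sizeTm u ≤ n → ClosedTm u → ∀ b : A,
      (∀ (N : Set (Lit F ar V A)) (t' : Tm F ar V),
        (∀ β ∈ N, β.isNeg ∧ ClosedLit β) → ClosedTm t' →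
        Proves R N (Lit.pos u b t') →
        ∃ β ∈ N, ∃ d : Lit F ar V A, (∃ κ : Ordinal.{u}, SupB R κ d) ∧ Denies d β) →
      ∃ κ : Ordinal.{u}, SupB R κ (Lit.neg u b) := by
  intro n
  induction n with
  | zero =>
    intro u hsz
    exact absurd hsz (by have := one_le_sizeTm u; omega)
  | succ n IH =>
    intro u hsz hu b hQ
    apply supB_prefix
    refine Or.inr ⟨trivial, hu, ?_⟩
    intro r hr σ hσ hden
    obtain ⟨hntytt, ⟨hNoLook, hNoFree⟩, ⟨f, xs, hinj, hsrc⟩, hxlhs⟩ := hfmt r hr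
    obtain ⟨s, c, tg, hc⟩ : ∃ s c tg, r.concl = Lit.pos s c tg := by
      cases hcc : r.concl with
      | pos s c tg => exact ⟨s, c, tg, rfl⟩
      | neg s c => exact absurd (by rw [hcc]; trivial) (hstd r hr)
    have hsource : r.source = s := by unfold Rule.source; rw [hc]; rfl
    rw [hc] at hden
    simp only [subLit, Denies] at hden
    obtain ⟨hsu, hcb⟩ := hden
    have hs_eq : s = Tm.app f (fun i => Tm.var (xs i)) := by rw [← hsource]; exact hsrc
    have hueq : u = Tm.app f (fun i => σ (xs i)) := by rw [← hsu, hs_eq]; rfl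
    have hlhs_not_rhs : ∀ {x : V} {c' : A} {y : V},
        Lit.pos (Tm.var x) c' (Tm.var y) ∈ r.prem → x ∉ rhsVars r.prem := by
      intro x c' y hm hx
      exact hNoLook x hx (Set.mem_biUnion hm
        (show x ∈ varsTm (Lit.lhs (Lit.pos (Tm.var x) c' (Tm.var y))) from rfl))
    have hneg_not_rhs : ∀ {w : Tm F ar V} {c' : A}, Lit.neg w c' ∈ r.prem →
        ∀ v ∈ varsTm w, v ∉ rhsVars r.prem := by
      intro w c' hm v hv hvr
      exact hNoLook v hvr (Set.mem_biUnion hm hv)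
    have hsrc_not_rhs : ∀ v ∈ varsTm r.source, v ∉ rhsVars r.prem := by
      intro v hv hvr
      obtain ⟨tt, cc, hmem⟩ := hvr
      exact hntytt.rhs_fresh hmem hv
    by_cases hA : ∃ β' ∈ r.prem, ∃ x c' y, β' = Lit.pos (Tm.var x) c' (Tm.var y) ∧
        ∀ (N : Set (Lit F ar V A)) (t' : Tm F ar V),
          (∀ γ ∈ N, γ.isNeg ∧ ClosedLit γ) → ClosedTm t' →
          Proves R N (Lit.pos (σ x) c' t') →
          ∃ γ ∈ N, ∃ d : Lit F ar V A, (∃ κ : Ordinal.{u}, SupB R κ d) ∧ Denies d γ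
    · obtain ⟨β', hβ'm, x, c', y, rfl, hQ'⟩ := hA
      have hxlhsv : x ∈ lhsVars r.prem := Set.mem_biUnion hβ'm
        (show x ∈ varsTm (Lit.lhs (Lit.pos (Tm.var x) c' (Tm.var y))) from rfl)
      have hxnotrhs : x ∉ rhsVars r.prem := fun hx => hNoLook x hx hxlhsv
      have hxsrc : x ∈ varsTm r.source := by
        have hxvars : x ∈ r.vars := Set.mem_union_right _
          (Set.mem_biUnion hβ'm (Set.mem_union_left _ rfl))
        rcases hNoFree x hxvars with h | h
        · exact h
        · exact absurd h hxnotrhs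
      obtain ⟨i, hi⟩ : ∃ i, xs i = x := by
        rw [hsrc] at hxsrc
        simp only [varsTm] at hxsrc
        obtain ⟨i, hx⟩ := Set.mem_iUnion.1 hxsrc
        exact ⟨i, hx.symm⟩
      have hsz' : sizeTm (σ x) ≤ n := by
        have h1 := sizeTm_lt f (fun i => σ (xs i)) i
        rw [← hueq, hi] at h1
        omega
      have hPneg := IH (σ x) hsz' (hσ x) c' hQ'
      exact ⟨Lit.neg (σ x) c', hPneg, Lit.pos (Tm.var x) c' (Tm.var y), hβ'm, rfl, rfl⟩
    · classical
      have hrv : ∀ v : {v // v ∈ rhsVars r.prem}, ∃ (x : V) (c' : A),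
          Lit.pos (Tm.var x) c' (Tm.var v.1) ∈ r.prem := by
        rintro ⟨v, hv⟩
        obtain ⟨tt, cc, hmem⟩ := hv
        obtain ⟨x, rfl⟩ := hxlhs hmem
        exact ⟨x, cc, hmem⟩
      choose xv cv hxv using hrv
      have hB : ∀ v : {v // v ∈ rhsVars r.prem}, ∃ (N : Set (Lit F ar V A)) (t' : Tm F ar V),
          (∀ γ ∈ N, γ.isNeg ∧ ClosedLit γ) ∧ ClosedTm t' ∧
          Proves R N (Lit.pos (σ (xv v)) (cv v) t') ∧
          ¬ ∃ γ ∈ N, ∃ d : Lit F ar V A, (∃ κ : Ordinal.{u}, SupB R κ d) ∧ Denies d γ := by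
        intro v
        by_contra hcon
        apply hA
        refine ⟨_, hxv v, xv v, cv v, v.1, rfl, ?_⟩
        intro N t' h1 h2 h3
        by_contra hno
        exact hcon ⟨N, t', h1, h2, h3, hno⟩
      choose Nf tf hNf₁ hNf₂ hNf₃ hNf₄ using hB
      set σs : V → Tm F ar V :=
        fun v => if h : v ∈ rhsVars r.prem then tf ⟨v, h⟩ else σ v with hσs
      have hσs_closed : ∀ v, ClosedTm (σs v) := by
        intro v
        rw [hσs]
        by_cases h : v ∈ rhsVars r.prem
        · simp only [dif_pos h]; exact hNf₂ _
        · simp only [dif_neg h]; exact hσ v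
      set NT : Set (Lit F ar V A) :=
        (⋃ v : {v // v ∈ rhsVars r.prem}, Nf v) ∪
        {l | ∃ γ ∈ r.prem, γ.isNeg ∧ l = subLit σ γ} with hNT
      have hNTok : ∀ γ ∈ NT, γ.isNeg ∧ ClosedLit γ := by
        intro γ hγ
        rcases hγ with h | h
        · obtain ⟨v, hv⟩ := Set.mem_iUnion.1 h
          exact hNf₁ v γ hv
        · obtain ⟨γ₀, hγ₀, hγneg, rfl⟩ := h
          cases γ₀ with
          | pos _ _ _ => exact hγneg.elim
          | neg w c' =>
            refine ⟨?_, closed_subLit σ hσ _⟩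
            simp only [subLit]
            trivial
      have hstep : Proves R NT (subLit σs r.concl) := by
        refine Proves.step r σs hr ?_
        intro γ hγ
        cases γ with
        | pos p c' q =>
          obtain ⟨x, rfl⟩ := hxlhs hγ
          obtain ⟨y, rfl⟩ := hntytt.rhs_var hγ
          have hy : y ∈ rhsVars r.prem := ⟨Tm.var x, c', hγ⟩
          have h1 : σs y = tf ⟨y, hy⟩ := dif_pos hy
          have h2 : σs x = σ x := dif_neg (hlhs_not_rhs hγ)
          have h3 := hntytt.rhs_distinct (hxv ⟨y, hy⟩) hγ
          have hx' : xv ⟨y, hy⟩ = x := Tm.var.inj h3.1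
          show Proves R NT (subLit σs (Lit.pos (Tm.var x) c' (Tm.var y)))
          simp only [subLit, subTm]
          rw [h1, h2]
          have hpf := hNf₃ ⟨y, hy⟩
          rw [hx', h3.2] at hpf
          exact hpf.mono (fun l hl => Or.inl (Set.mem_iUnion.2 ⟨⟨y, hy⟩, hl⟩))
        | neg w c' =>
          have heqlit : subLit σs (Lit.neg w c') = subLit σ (Lit.neg w c') := by
            simp only [subLit]
            congr 1
            apply subTm_congr
            intro v hv
            exact dif_neg (hneg_not_rhs hγ v hv)
          rw [heqlit]
          exact Proves.hyp (Or.inr ⟨Lit.neg w c', hγ, trivial, rfl⟩)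
      have hconc : subLit σs r.concl = Lit.pos u b (subTm σs tg) := by
        rw [hc]
        simp only [subLit]
        rw [hcb]
        have hss : subTm σs s = u := by
          rw [← hsu]
          apply subTm_congr
          intro v hv
          exact dif_neg (hsrc_not_rhs v (by rw [hsource]; exact hv))
        rw [hss]
      rw [hconc] at hstep
      obtain ⟨β, hβNT, d, hPd, hdden⟩ :=
        hQ NT (subTm σs tg) hNTok (closed_subTm _ hσs_closed tg) hstep
      rcases hβNT with h | h
      · obtain ⟨v, hv⟩ := Set.mem_iUnion.1 h
        exact absurd ⟨β, hv, d, hPd, hdden⟩ (hNf₄ v)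
      · obtain ⟨γ₀, hγ₀, hγneg, rfl⟩ := h
        exact ⟨d, hPd, γ₀, hγ₀, hdden⟩

lemma ws_to_supB (hstd : ∀ r ∈ R, ¬ r.concl.isNeg) (hfmt : ∀ r ∈ R, DecentXynft r)
    {α : Lit F ar V A} (h : WS R α) : ∃ κ : Ordinal.{u}, SupB R κ α := by
  induction h with
  | step r σ hr hσ hp ih =>
    exact supB_prefix (Or.inl ⟨r, hr, σ, hσ, rfl, fun β hβ => ih β hβ⟩)
  | neg t a δ hclt hWS hden ih =>
    refine key_neg hstd hfmt (sizeTm t) t le_rfl hclt a ?_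
    intro N t' h1 h2 h3
    obtain ⟨β, hβ, hd⟩ := hden N t' h1 h2 h3
    exact ⟨β, hβ, δ N t', ih N t' h1 h2 h3, hd⟩

end Dir2

/-- for a standard TSS in decent xynft format, supported provability and
well-supported provability coincide on closed literals. -/
theorem supported_iff_well_supported (F V A : Type) (ar : F → ℕ)
    (R : Set (Rule F ar V A))
    (hstd : ∀ r ∈ R, ¬ r.concl.isNeg)
    (hfmt : ∀ r ∈ R, DecentXynft r) :
    ∀ α : Lit F ar V A, ClosedLit α → ((∃ κ : Ordinal, SupB R κ α) ↔ WS R α) := by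
  intro α hα
  constructor
  · rintro ⟨κ, h⟩
    exact supB_to_ws hstd κ α h
  · intro h
    exact ws_to_supB hstd hfmt h
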